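/- Let p be prime, χ a nontrivial multiplicative character of 𝔽_p, and A, B ⊆ 𝔽_p. Then |∑_{a∈A} ∑_{b∈B} χ(a+b)| ≤ √(p·|A|·|B|). -/

import Mathlib

/-!
Write `f(a) = ∑_{b ∈ B} χ(a + b)`. By Cauchy–Schwarz, `|∑_{a ∈ A} f(a)|² ≤ |A| ∑_{a ∈ 𝔽_p} |f(a)|²`.
Expanding the square, `∑_a |f(a)|² = ∑_{b, b' ∈ B} ∑_a χ(a + b) χ̄(a + b')`, and the inner
correlation sum is `p - 1` on the diagonal and `-1` off it (a Jacobi sum `J(χ, χ⁻¹)` after the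
substitution `a + b = (b - b') t`). Hence `∑_a |f(a)|² = p|B| - |B|² ≤ p|B|`.
-/

open Finset

lemma norm_sum_le_sqrt_card_mul_sum_norm_sq {ι E : Type*} [SeminormedAddCommGroup E]
    (s : Finset ι) (f : ι → E) : ‖∑ i ∈ s, f i‖ ≤ √(#s * ∑ i ∈ s, ‖f i‖ ^ 2) :=
  (norm_sum_le s f).trans (Real.le_sqrt_of_sq_le (sq_sum_le_card_mul_sum_sq ..))

namespace MulChar

variable {F R : Type*} [Field F] [CommRing R]

lemma apply_mul_inv_apply (χ : MulChar F R) {a : F} (ha : a ≠ 0) : χ a * χ⁻¹ a = 1 := by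
  rw [inv_apply', ← map_mul, mul_inv_cancel₀ ha, map_one]

variable [Fintype F]

lemma sum_mul_inv_apply (χ : MulChar F R) : ∑ x, χ x * χ⁻¹ x = Fintype.card F - 1 := by
  classical
  rw [← Nat.cast_one, ← Nat.cast_sub Fintype.card_pos, ← Fintype.card_units,
    ← sum_one_eq_card_units, ← mul_inv_cancel χ]
  rfl

variable [IsDomain R]

lemma sum_mul_inv_apply_add {χ : MulChar F R} (hχ : χ ≠ 1) {c : F} (hc : c ≠ 0) :
    ∑ x, χ x * χ⁻¹ (x + c) = -1 := by
  have hscale : Function.Bijective (fun t : F => -c * t) :=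
    mulLeft_bijective₀ (-c) (neg_ne_zero.mpr hc)
  calc ∑ x, χ x * χ⁻¹ (x + c)
      = ∑ t, χ (-c * t) * χ⁻¹ (-c * t + c) :=
        (Fintype.sum_bijective _ hscale _ _ fun _ => rfl).symm
    _ = ∑ t, χ (-1) * (χ c * χ⁻¹ c) * (χ t * χ⁻¹ (1 - t)) := by
        refine sum_congr rfl fun t _ => ?_
        rw [show -c * t + c = c * (1 - t) by ring, show -c * t = -1 * c * t by ring,
          map_mul, map_mul, map_mul]
        ring
    _ = χ (-1) * jacobiSum χ χ⁻¹ := by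
        rw [apply_mul_inv_apply χ hc, mul_one, ← mul_sum, jacobiSum]
    _ = -1 := by
        rw [jacobiSum_nontrivial_inv hχ, mul_neg, ← map_mul, neg_one_mul, neg_neg, map_one]

lemma sum_apply_add_mul_inv_apply_add [DecidableEq F] {χ : MulChar F R} (hχ : χ ≠ 1)
    (b b' : F) :
    ∑ a, χ (a + b) * χ⁻¹ (a + b') = (if b = b' then (Fintype.card F : R) else 0) - 1 := by
  have hshift : ∑ a, χ (a + b) * χ⁻¹ (a + b') = ∑ x, χ x * χ⁻¹ (x + (b' - b)) :=
    Fintype.sum_equiv (Equiv.addRight b) _ _ fun a => by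
      rw [Equiv.coe_addRight, add_assoc, add_sub_cancel]
  rw [hshift]
  split_ifs with hbb
  · rw [hbb, sub_self]
    simpa using sum_mul_inv_apply χ
  · rw [zero_sub]
    exact sum_mul_inv_apply_add hχ (sub_ne_zero.mpr (Ne.symm hbb))

lemma sum_norm_sum_apply_add_sq {χ : MulChar F ℂ} (hχ : χ ≠ 1) (B : Finset F) :
    ∑ a, ‖∑ b ∈ B, χ (a + b)‖ ^ 2 = Fintype.card F * #B - #B ^ 2 := by
  classical
  have hcomplex : ∑ a, (‖∑ b ∈ B, χ (a + b)‖ ^ 2 : ℂ)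
      = ∑ b ∈ B, ∑ b' ∈ B, ∑ a, χ (a + b) * χ⁻¹ (a + b') := by
    simp_rw [← Complex.mul_conj', map_sum, ← RCLike.star_def, star_apply', sum_mul_sum]
    rw [sum_comm]
    exact sum_congr rfl fun _ _ => sum_comm
  simp only [sum_apply_add_mul_inv_apply_add hχ, sum_sub_distrib, sum_ite_eq, sum_ite_mem,
    inter_self, sum_const, nsmul_eq_mul, mul_one] at hcomplex
  rw [show (#B : ℂ) * Fintype.card F - #B * #B = ((Fintype.card F * #B - #B ^ 2 : ℝ) : ℂ) by
    push_cast; ring] at hcomplex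
  exact_mod_cast hcomplex

theorem norm_sum_sum_apply_add_le {χ : MulChar F ℂ} (hχ : χ ≠ 1) (A B : Finset F) :
    ‖∑ a ∈ A, ∑ b ∈ B, χ (a + b)‖ ≤ √(Fintype.card F * #A * #B) := by
  set f : F → ℂ := fun a => ∑ b ∈ B, χ (a + b)
  have hsecond : ∑ a, ‖f a‖ ^ 2 ≤ Fintype.card F * #B := by
    rw [sum_norm_sum_apply_add_sq hχ B]
    exact sub_le_self _ (by positivity)
  calc ‖∑ a ∈ A, f a‖
      ≤ √(#A * ∑ a ∈ A, ‖f a‖ ^ 2) := norm_sum_le_sqrt_card_mul_sum_norm_sq A f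
    _ ≤ √(#A * ∑ a, ‖f a‖ ^ 2) := by gcongr; exact subset_univ A
    _ ≤ √(#A * (Fintype.card F * #B)) := by gcongr
    _ = √(Fintype.card F * #A * #B) := by ring_nf

end MulChar

theorem paley_sum_bound (p : ℕ) [Fact p.Prime]
    (χ : MulChar (ZMod p) ℂ) (hχ : χ ≠ 1)
    (A B : Finset (ZMod p)) :
    ‖∑ a ∈ A, ∑ b ∈ B, χ (a + b)‖ ≤
      Real.sqrt (p * A.card * B.card) := by
  simpa only [ZMod.card] using MulChar.norm_sum_sum_apply_add_le hχ A B
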